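/- For A = −d/ds on E_{M_n} over [0,1] with D(A) = { f : f' ∈ E_{M_n}, f(0) = 0 }, the operator A is not stationary dense: for every k ∈ ℕ₀, the function f(t) = t^k / k! belongs to D(A^k) but not to the closure of D(A^{k+1}), since every g in the closure of D(A^{k+1}) satisfies g^{(k)}(0) = 0 while f^{(k)}(0) = 1. -/

import Mathlib

open Set

/-- Membership in the ultradifferentiable class `E_{M_n}` on `[0,1]`:
`f` is smooth and `‖f‖_{M_n,h} = sup_n sup_t ‖f^{(n)}(t)‖/(M_n h^n) < ∞`. -/
def memUltra (M : ℕ → ℝ) (h : ℝ) (f : ℝ → ℂ) : Prop :=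
  ContDiff ℝ (⊤ : ℕ∞) f ∧ ∃ B : ℝ, ∀ n : ℕ, ∀ t ∈ Set.Icc (0:ℝ) 1,
    ‖iteratedDeriv n f t‖ ≤ B * M n * h ^ n

/-- `D(A^k)` for `A = -d/ds` on `E_{M_n}` with `D(A) = {f : f' ∈ E_{M_n}, f(0) = 0}`. -/
def ultraDom (M : ℕ → ℝ) (h : ℝ) (k : ℕ) : Set (ℝ → ℂ) :=
  {f | memUltra M h f ∧ (∀ j ≤ k, memUltra M h (iteratedDeriv j f)) ∧
    ∀ j < k, iteratedDeriv j f 0 = 0}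

/-- The normalized monomial `t ↦ t^m / m!` (as a map `ℝ → ℂ`). -/
noncomputable def monk (m : ℕ) : ℝ → ℂ := fun t => (t : ℂ) ^ m / (m.factorial : ℂ)

lemma monk_contDiff (m : ℕ) : ContDiff ℝ (⊤ : ℕ∞) (monk m) :=
  (Complex.ofRealCLM.contDiff.pow m).div_const _

lemma deriv_monk (m : ℕ) : deriv (monk (m + 1)) = monk m := by
  funext t
  have h1 : HasDerivAt (fun z : ℂ => z ^ (m + 1)) ((m + 1) * (t : ℂ) ^ m) (t : ℂ) := by
    simpa using hasDerivAt_pow (m + 1) (t : ℂ)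
  have h2 := (h1.comp_ofReal).div_const ((m + 1).factorial : ℂ)
  have h3 : ((m + 1 : ℂ) * (t : ℂ) ^ m) / ((m + 1).factorial : ℂ) = monk m t := by
    have hfac : ((m + 1).factorial : ℂ) = (m + 1) * (m.factorial : ℂ) := by
      rw [Nat.factorial_succ]; push_cast; ring
    have hm : ((m : ℂ) + 1) ≠ 0 := Nat.cast_add_one_ne_zero m
    have hf : (m.factorial : ℂ) ≠ 0 := Nat.cast_ne_zero.mpr m.factorial_ne_zero
    rw [hfac, monk]
    field_simp
  rw [show monk m t = ((m + 1 : ℂ) * (t : ℂ) ^ m) / ((m + 1).factorial : ℂ) from h3.symm]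
  exact (by exact h2 : HasDerivAt (monk (m + 1)) _ t).deriv

lemma iteratedDeriv_zero_fun (j : ℕ) : iteratedDeriv j (fun _ : ℝ => (0 : ℂ)) = fun _ => 0 := by
  induction j with
  | zero => simp [iteratedDeriv_zero]
  | succ n ih => rw [iteratedDeriv_succ', show deriv (fun _ : ℝ => (0 : ℂ)) = fun _ => 0 by
      funext t; simp]; exact ih

lemma iteratedDeriv_monk (j m : ℕ) :
    iteratedDeriv j (monk m) = if j ≤ m then monk (m - j) else fun _ => 0 := by
  induction j generalizing m with
  | zero => simp
  | succ n ih =>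
    rw [iteratedDeriv_succ']
    cases m with
    | zero =>
      have : deriv (monk 0) = fun _ : ℝ => (0 : ℂ) := by
        have : monk 0 = fun _ : ℝ => (1 : ℂ) := by funext t; simp [monk]
        rw [this]; funext t; simp
      rw [this, iteratedDeriv_zero_fun]
      simp
    | succ m =>
      rw [deriv_monk, ih]
      by_cases hc : n ≤ m
      · simp [hc, Nat.succ_le_succ hc, Nat.succ_sub_succ]
      · simp [hc, fun hx => hc (Nat.succ_le_succ_iff.mp hx)]

lemma norm_monk_le (m : ℕ) {t : ℝ} (ht : t ∈ Set.Icc (0:ℝ) 1) : ‖monk m t‖ ≤ 1 := by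
  have h1 : ‖monk m t‖ = |t| ^ m / (m.factorial : ℝ) := by
    simp [monk, Complex.norm_natCast]
  rw [h1]
  have h2 : |t| ≤ 1 := abs_le.mpr ⟨by linarith [ht.1], ht.2⟩
  have h3 : |t| ^ m ≤ 1 := pow_le_one₀ (abs_nonneg t) h2
  have h4 : (1 : ℝ) ≤ (m.factorial : ℝ) := by exact_mod_cast m.factorial_pos
  rw [div_le_one (by positivity)]
  exact h3.trans h4

lemma memUltra_monk (M : ℕ → ℝ) (hMpos : ∀ n, 0 < M n) (h : ℝ) (hh : 0 < h) (m : ℕ) :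
    memUltra M h (monk m) := by
  refine ⟨monk_contDiff m, ?_⟩
  set B := (Finset.range (m + 1)).sup' ⟨0, by simp⟩ (fun n => 1 / (M n * h ^ n)) with hB
  have hBge : ∀ n ≤ m, 1 / (M n * h ^ n) ≤ B := fun n hn =>
    Finset.le_sup' (fun n => 1 / (M n * h ^ n)) (Finset.mem_range.mpr (Nat.lt_succ_of_le hn))
  have hM0' := hMpos 0
  have hBpos : 0 < B := lt_of_lt_of_le (by positivity) (hBge 0 (Nat.zero_le m))
  refine ⟨B, fun n t ht => ?_⟩
  rw [iteratedDeriv_monk]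
  by_cases hn : n ≤ m
  · simp only [hn, if_true]
    have h1 : ‖monk (m - n) t‖ ≤ 1 := norm_monk_le _ ht
    have hMn := hMpos n
    have h2 : 0 < M n * h ^ n := by positivity
    have h3 : 1 ≤ B * (M n * h ^ n) := by
      have := (div_le_iff₀ h2).mp (hBge n hn)
      linarith
    calc ‖monk (m - n) t‖ ≤ 1 := h1
      _ ≤ B * (M n * h ^ n) := h3
      _ = B * M n * h ^ n := by ring
  · simp only [hn, if_false]
    have hMn := hMpos n
    have : 0 ≤ B * M n * h ^ n := by positivity
    simpa using this

lemma monk_eq (k : ℕ) : (fun t : ℝ => (t : ℂ) ^ k / (k.factorial : ℂ)) = monk k := rfl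

/-- `A = -d/ds` on `E_{M_n}` over `[0,1]` with `D(A) = {f : f' ∈ E_{M_n}, f(0) = 0}` is
not stationary dense: for every `k`, `f(t) = t^k/k!` lies in `D(A^k)`, every
`g ∈ D(A^{k+1})` has `g^{(k)}(0) = 0` while `f^{(k)}(0) = 1`, so `f` has
`‖f - g‖_{M_n,h}`-distance at least `ε > 0` from `D(A^{k+1})`, i.e. `f` is not in the
closure of `D(A^{k+1})`. -/
theorem stmt13 (M : ℕ → ℝ) (hM0 : M 0 = 1) (hMpos : ∀ n, 0 < M n) (hMmono : Monotone M)
    (hM1 : ∀ n : ℕ, 1 ≤ n → M n ^ 2 ≤ M (n - 1) * M (n + 1))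
    (h : ℝ) (hh : 0 < h) (k : ℕ) :
    (fun t : ℝ => (t : ℂ) ^ k / (k.factorial : ℂ)) ∈ ultraDom M h k ∧
    iteratedDeriv k (fun t : ℝ => (t : ℂ) ^ k / (k.factorial : ℂ)) 0 = 1 ∧
    (∀ g ∈ ultraDom M h (k + 1), iteratedDeriv k g 0 = 0) ∧
    ∃ ε : ℝ, 0 < ε ∧ ∀ g ∈ ultraDom M h (k + 1), ∃ (n : ℕ) (t : ℝ), t ∈ Set.Icc (0:ℝ) 1 ∧
      ε * (M n * h ^ n) ≤
        ‖iteratedDeriv n (fun t : ℝ => (t : ℂ) ^ k / (k.factorial : ℂ) - g t) t‖ := by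
  rw [monk_eq]
  have hfk : iteratedDeriv k (monk k) 0 = 1 := by
    rw [iteratedDeriv_monk]
    simp [monk]
  refine ⟨⟨memUltra_monk M hMpos h hh k, ?_, ?_⟩, hfk, ?_, ?_⟩
  · intro j hj
    rw [iteratedDeriv_monk]
    simp only [hj, if_true]
    exact memUltra_monk M hMpos h hh (k - j)
  · intro j hj
    rw [iteratedDeriv_monk]
    simp only [le_of_lt hj, if_true]
    have : k - j ≠ 0 := Nat.sub_ne_zero_of_lt hj
    simp [monk, zero_pow this]
  · intro g hg
    exact hg.2.2 k (Nat.lt_succ_self k)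
  · have hMk := hMpos k
    refine ⟨1 / (M k * h ^ k), by positivity, fun g hg => ⟨k, 0, by simp, ?_⟩⟩
    have hgc : ContDiff ℝ (k : ℕ∞) g := hg.1.1.of_le (by exact_mod_cast le_top)
    have hfc : ContDiff ℝ (k : ℕ∞) (monk k) := (monk_contDiff k).of_le (by exact_mod_cast le_top)
    have hgk : iteratedDeriv k g 0 = 0 := hg.2.2 k (Nat.lt_succ_self k)
    have heq : (fun t : ℝ => (t : ℂ) ^ k / (k.factorial : ℂ) - g t) = monk k + fun t => -g t := by
      funext t; simp [monk, sub_eq_add_neg]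
    have hsub : iteratedDeriv k (monk k + fun t => -g t) 0 =
        iteratedDeriv k (monk k) 0 - iteratedDeriv k g 0 := by
      rw [iteratedDeriv_eq_iteratedFDeriv, iteratedDeriv_eq_iteratedFDeriv,
        iteratedDeriv_eq_iteratedFDeriv, iteratedFDeriv_add_apply (i := k) (hfc.of_le (by exact_mod_cast le_rfl)).contDiffAt
          (hgc.neg.of_le (by exact_mod_cast le_rfl)).contDiffAt]
      rw [show (fun x => -g x) = -g from rfl, iteratedFDeriv_neg_apply]
      simp [sub_eq_add_neg]
    rw [heq, hsub, hfk, hgk, sub_zero]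
    have : (0:ℝ) < M k * h ^ k := by positivity
    rw [one_div, inv_mul_cancel₀ (ne_of_gt this)]
    simp
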